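/- arXiv:0910.4618 — 2 statements merged into one kernel-verified Lean document; each statement's English description precedes it below -/
import Mathlib

section
/- The marginal product MP satisfies: MP(n) > MP(n−1) for every integer n ≥ 2 (i.e., MP is strictly increasing), and MP(n) > g(n) for every integer n ≥ 2. -/
open Filter Finset

/-- The benefit function `f` with its first and second derivatives, together with
the maximizer map `α ↦ x̂_α` (the unique `x ≥ 0` with `f'(x̂_α) = α` for `α ∈ (0, f'(0)]`). -/
structure BenefitFun where
  f : ℝ → ℝ
  f' : ℝ → ℝ
  f'' : ℝ → ℝ
  xhat : ℝ → ℝ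
  f_zero : f 0 = 0
  f_nonneg : ∀ x : ℝ, 0 ≤ x → 0 ≤ f x
  hasDeriv : ∀ x ∈ Set.Ici (0:ℝ), HasDerivWithinAt f (f' x) (Set.Ici 0) x
  hasDeriv' : ∀ x ∈ Set.Ici (0:ℝ), HasDerivWithinAt f' (f'' x) (Set.Ici 0) x
  cont_f'' : ContinuousOn f'' (Set.Ici 0)
  f'_pos : ∀ x : ℝ, 0 < x → 0 < f' x
  f''_neg : ∀ x : ℝ, 0 < x → f'' x < 0
  f'_tendsto : Filter.Tendsto f' Filter.atTop (nhds 0)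
  xhat_nonneg : ∀ α : ℝ, 0 < α → α ≤ f' 0 → 0 ≤ xhat α
  xhat_spec : ∀ α : ℝ, 0 < α → α ≤ f' 0 → f' (xhat α) = α
  xhat_unique : ∀ α : ℝ, 0 < α → α ≤ f' 0 → ∀ x : ℝ, 0 ≤ x → f' x = α → x = xhat α
  xhat_max : ∀ α : ℝ, 0 < α → α ≤ f' 0 → ∀ x : ℝ, 0 ≤ x → f x - α * x ≤ f (xhat α) - α * xhat α

/-- `f*(α) = f(x̂_α) − α·x̂_α = sup_{x ≥ 0} (f(x) − α x)`. -/
noncomputable def BenefitFun.fstar (B : BenefitFun) (α : ℝ) : ℝ :=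
  B.f (B.xhat α) - α * B.xhat α

/-- `β̃(n) = (1/n)·κ + ((n−1)/n)·(δ+σ)`. -/
noncomputable def btilde (κ δ σ : ℝ) (n : ℕ) : ℝ :=
  (1 / (n:ℝ)) * κ + (((n:ℝ) - 1) / (n:ℝ)) * (δ + σ)

/-- `G(n) = n·f*(β̃(n))` (with `G(0) = 0`). -/
noncomputable def Gfun (B : BenefitFun) (κ δ σ : ℝ) (n : ℕ) : ℝ :=
  (n:ℝ) * B.fstar (btilde κ δ σ n)

/-- Marginal product: `MP(n) = G(n) − G(n−1)`, so `MP(1) = G(1)`. -/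
noncomputable def MP (B : BenefitFun) (κ δ σ : ℝ) (n : ℕ) : ℝ :=
  Gfun B κ δ σ n - Gfun B κ δ σ (n - 1)

/-! Extending `G` to `G(t) = t · f*(δ + σ + (κ - δ - σ) / t)` for real `t ≥ 1` gives the perspective
of the convex function `f*`, so `G` is convex and its increments `MP(n) = G(n) - G(n - 1)` increase.
Concretely, the envelope theorem makes `-x̂_α` a subgradient of `f*` at `α`, which yields
`MP(k) ≤ G'(k) < MP(k + 1)`; the inequality is strict because `x̂_α > 0` is an interior point where
`f' = α`, so it cannot maximize `f(x) - β·x` for `β ≠ α`. Finally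
`MP(n) - g(n) = (n - 1)(g(n) - g(n - 1)) > 0` since `f*` strictly decreases and `β̃` decreases. -/

namespace BenefitFun

variable (B : BenefitFun) {α β x : ℝ}

theorem hasDerivAt_f (hx : 0 < x) : HasDerivAt B.f (B.f' x) x :=
  (B.hasDeriv x hx.le).hasDerivAt (Ici_mem_nhds hx)

theorem sub_mul_le_fstar (hα : α ∈ Set.Ioc 0 (B.f' 0)) (hx : 0 ≤ x) :
    B.f x - α * x ≤ B.fstar α :=
  B.xhat_max α hα.1 hα.2 x hx

/-- By Fermat's rule, since `x` is interior to `[0, ∞)`. -/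
theorem sub_mul_lt_fstar (hα : α ∈ Set.Ioc 0 (B.f' 0)) (hx : 0 < x) (hne : B.f' x ≠ α) :
    B.f x - α * x < B.fstar α := by
  refine (B.sub_mul_le_fstar hα hx.le).lt_of_ne fun heq => hne ?_
  have hmax : IsLocalMax (fun y => B.f y - α * y) x := by
    filter_upwards [Ici_mem_nhds hx] with y hy
    exact heq ▸ B.sub_mul_le_fstar hα hy
  have := hmax.hasDerivAt_eq_zero ((B.hasDerivAt_f hx).sub ((hasDerivAt_id x).const_mul α))
  linarith

theorem xhat_pos (hα : α ∈ Set.Ioo 0 (B.f' 0)) : 0 < B.xhat α := by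
  refine (B.xhat_nonneg α hα.1 hα.2.le).lt_of_ne fun h => ?_
  have := B.xhat_spec α hα.1 hα.2.le
  rw [← h] at this
  exact hα.2.ne' this

/-- Envelope theorem: `-x̂_α` is a subgradient of `f*` at `α`. -/
theorem fstar_sub_mul_xhat_le (hα : α ∈ Set.Ioc 0 (B.f' 0)) (hβ : β ∈ Set.Ioc 0 (B.f' 0)) :
    B.fstar α - (β - α) * B.xhat α ≤ B.fstar β := by
  have := B.sub_mul_le_fstar hβ (B.xhat_nonneg α hα.1 hα.2)
  unfold fstar at *
  linarith

theorem fstar_sub_mul_xhat_lt (hα : α ∈ Set.Ioo 0 (B.f' 0)) (hβ : β ∈ Set.Ioc 0 (B.f' 0))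
    (hne : α ≠ β) : B.fstar α - (β - α) * B.xhat α < B.fstar β := by
  have := B.sub_mul_lt_fstar hβ (B.xhat_pos hα) (by rwa [B.xhat_spec α hα.1 hα.2.le])
  unfold fstar at *
  linarith

theorem strictAntiOn_fstar : StrictAntiOn B.fstar (Set.Ioo 0 (B.f' 0)) := by
  intro α hα β hβ hαβ
  have := B.fstar_sub_mul_xhat_lt hβ (Set.Ioo_subset_Ioc_self hα) hαβ.ne'
  nlinarith [B.xhat_pos hβ]

end BenefitFun

section btilde

variable {κ δ σ : ℝ} {k : ℕ}

theorem btilde_eq (hk : 1 ≤ k) : btilde κ δ σ k = δ + σ + (κ - (δ + σ)) / k := by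
  have : (k : ℝ) ≠ 0 := by positivity
  unfold btilde
  field_simp
  ring

theorem btilde_sub_btilde_succ (hk : 1 ≤ k) :
    btilde κ δ σ k - btilde κ δ σ (k + 1) = (κ - (δ + σ)) / (k * (k + 1)) := by
  have : (k : ℝ) ≠ 0 := by positivity
  rw [btilde_eq hk, btilde_eq (by omega)]
  push_cast
  field_simp
  ring

theorem btilde_mem_Ioc (hcost : δ + σ < κ) (hk : 1 ≤ k) :
    btilde κ δ σ k ∈ Set.Ioc (δ + σ) κ := by
  have hk' : (1 : ℝ) ≤ k := by exact_mod_cast hk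
  rw [btilde_eq hk]
  constructor
  · have : 0 < (κ - (δ + σ)) / k := by apply div_pos <;> linarith
    linarith
  · linarith [div_le_self (by linarith : 0 ≤ κ - (δ + σ)) hk']

theorem btilde_succ_lt (hcost : δ + σ < κ) (hk : 1 ≤ k) :
    btilde κ δ σ (k + 1) < btilde κ δ σ k := by
  have : (0 : ℝ) < k := by exact_mod_cast hk
  rw [← sub_pos, btilde_sub_btilde_succ hk]
  apply div_pos <;> [linarith; positivity]

end btilde

section marginalProduct

variable (B : BenefitFun) {κ δ σ : ℝ}

/-- The derivative at `t = k` of `t ↦ t · f*(δ + σ + (κ - δ - σ) / t)`, which interpolates `G`,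
computed with `(f*)' = -x̂`. -/
noncomputable def Gslope (κ δ σ : ℝ) (k : ℕ) : ℝ :=
  B.fstar (btilde κ δ σ k) + (κ - (δ + σ)) / k * B.xhat (btilde κ δ σ k)

theorem MP_succ_eq (k : ℕ) :
    MP B κ δ σ (k + 1) = B.fstar (btilde κ δ σ (k + 1))
      + k * (B.fstar (btilde κ δ σ (k + 1)) - B.fstar (btilde κ δ σ k)) := by
  simp only [MP, Gfun, Nat.add_sub_cancel, Nat.cast_add, Nat.cast_one]
  ring

variable (hc : 0 ≤ δ + σ) (hcost : δ + σ < κ) (hκf : κ < B.f' 0)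
include hc hcost hκf

theorem btilde_mem_Ioo {k : ℕ} (hk : 1 ≤ k) : btilde κ δ σ k ∈ Set.Ioo 0 (B.f' 0) :=
  have h := btilde_mem_Ioc hcost hk
  ⟨hc.trans_lt h.1, h.2.trans_lt hκf⟩

theorem MP_succ_le_Gslope (k : ℕ) : MP B κ δ σ (k + 1) ≤ Gslope B κ δ σ (k + 1) := by
  have hβ := Set.Ioo_subset_Ioc_self (btilde_mem_Ioo B hc hcost hκf (k := k + 1) (by omega))
  have hd : 0 ≤ κ - (δ + σ) := by linarith
  rw [MP_succ_eq, Gslope]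
  rcases Nat.eq_zero_or_pos k with rfl | hk
  · simp only [CharP.cast_eq_zero, zero_mul, add_zero, zero_add, Nat.cast_one, div_one]
    exact le_add_of_nonneg_right (mul_nonneg hd (B.xhat_nonneg _ hβ.1 hβ.2))
  · have hsub := B.fstar_sub_mul_xhat_le hβ
      (Set.Ioo_subset_Ioc_self (btilde_mem_Ioo B hc hcost hκf hk))
    have hk' : (0 : ℝ) < k := by exact_mod_cast hk
    have hslope : (κ - (δ + σ)) / ((k + 1 : ℕ) : ℝ)
        = k * ((κ - (δ + σ)) / (k * (k + 1))) := by
      push_cast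
      field_simp
    rw [hslope, ← btilde_sub_btilde_succ hk]
    nlinarith

theorem Gslope_lt_MP_succ {k : ℕ} (hk : 1 ≤ k) : Gslope B κ δ σ k < MP B κ δ σ (k + 1) := by
  have hk' : (0 : ℝ) < k := by exact_mod_cast hk
  have hsub := B.fstar_sub_mul_xhat_lt (btilde_mem_Ioo B hc hcost hκf hk)
    (Set.Ioo_subset_Ioc_self (btilde_mem_Ioo B hc hcost hκf (k := k + 1) (by omega)))
    (btilde_succ_lt hcost hk).ne'
  have hslope : (κ - (δ + σ)) / k = (k + 1) * ((κ - (δ + σ)) / (k * (k + 1))) := by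
    field_simp
  rw [MP_succ_eq, Gslope, hslope, ← btilde_sub_btilde_succ hk]
  nlinarith

theorem fstar_btilde_lt_MP_succ {k : ℕ} (hk : 1 ≤ k) :
    B.fstar (btilde κ δ σ (k + 1)) < MP B κ δ σ (k + 1) := by
  have hk' : (0 : ℝ) < k := by exact_mod_cast hk
  have := B.strictAntiOn_fstar (btilde_mem_Ioo B hc hcost hκf (k := k + 1) (by omega))
    (btilde_mem_Ioo B hc hcost hκf hk) (btilde_succ_lt hcost hk)
  rw [MP_succ_eq]
  nlinarith

end marginalProduct

theorem stmt3_general (B : BenefitFun)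
    (κ δ σ : ℝ) (hδ : 0 < δ) (hσ : 0 < σ)
    (hcost : δ + σ < κ) (hκf : κ < B.f' 0) :
    (∀ n : ℕ, 2 ≤ n → MP B κ δ σ (n - 1) < MP B κ δ σ n)
    ∧ (∀ n : ℕ, 2 ≤ n → B.fstar (btilde κ δ σ n) < MP B κ δ σ n) := by
  have hc : 0 ≤ δ + σ := by positivity
  constructor
  · intro n hn
    obtain ⟨k, rfl⟩ : ∃ k, n = k + 1 + 1 := ⟨n - 2, by omega⟩
    calc MP B κ δ σ (k + 1 + 1 - 1)
        = MP B κ δ σ (k + 1) := rfl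
      _ ≤ Gslope B κ δ σ (k + 1) := MP_succ_le_Gslope B hc hcost hκf k
      _ < MP B κ δ σ (k + 1 + 1) := Gslope_lt_MP_succ B hc hcost hκf (by omega)
  · intro n hn
    obtain ⟨k, rfl⟩ : ∃ k, n = k + 1 := ⟨n - 1, by omega⟩
    exact fstar_btilde_lt_MP_succ B hc hcost hκf (by omega)

theorem stmt3 (B : BenefitFun)
    (κ δ σ : ℝ) (hκ : 0 < κ) (hδ : 0 < δ) (hσ : 0 < σ)
    (hcost : δ + σ < κ) (hκf : κ < B.f' 0) :
    (∀ n : ℕ, 2 ≤ n → MP B κ δ σ (n - 1) < MP B κ δ σ n)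
    ∧ (∀ n : ℕ, 2 ≤ n → B.fstar (btilde κ δ σ n) < MP B κ δ σ n) :=
  stmt3_general B κ δ σ hδ hσ hcost hκf
end

section
/- The coalitional game v is convex (supermodular): for all subsets S, T ⊆ {1,…,N}, v(S ∪ T) + v(S ∩ T) ≥ v(S) + v(T). -/
open Filter Finset

/-- The coalitional game `v(S) = |S|·f*(β̃(|S|))` (so `v(∅) = 0`). -/
noncomputable def vgame (B : BenefitFun) (κ δ σ : ℝ) {N : ℕ} (S : Finset (Fin N)) : ℝ :=
  (S.card : ℝ) * B.fstar (btilde κ δ σ S.card)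

/-- For `n ≥ 1`, `β̃(n) > 0`. -/
lemma btilde_pos (κ δ σ : ℝ) (hκ : 0 < κ) (hδ : 0 < δ) (hσ : 0 < σ)
    (n : ℕ) (hn : 1 ≤ n) : 0 < btilde κ δ σ n := by
  have hn1 : (1:ℝ) ≤ (n:ℝ) := by exact_mod_cast hn
  have hnpos : (0:ℝ) < (n:ℝ) := by linarith
  unfold btilde
  have h1 : 0 < (1 / (n:ℝ)) * κ := by positivity
  have h2 : 0 ≤ (((n:ℝ) - 1) / (n:ℝ)) * (δ + σ) := by
    apply mul_nonneg
    · apply div_nonneg <;> linarith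
    · linarith
  linarith

/-- For `n ≥ 1`, `β̃(n) ≤ κ`. -/
lemma btilde_le (κ δ σ : ℝ) (hcost : δ + σ < κ)
    (n : ℕ) (hn : 1 ≤ n) : btilde κ δ σ n ≤ κ := by
  have hn1 : (1:ℝ) ≤ (n:ℝ) := by exact_mod_cast hn
  have hnpos : (0:ℝ) < (n:ℝ) := by linarith
  unfold btilde
  have heq : 1 / (n:ℝ) * κ + ((n:ℝ) - 1) / (n:ℝ) * (δ + σ) =
      (κ + ((n:ℝ) - 1) * (δ + σ)) / (n:ℝ) := by field_simp
  rw [heq, div_le_iff₀ hnpos]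
  nlinarith

/-- `n·β̃(n) = κ + (n−1)(δ+σ)` for `n ≥ 1`. -/
lemma btilde_mul (κ δ σ : ℝ) (n : ℕ) (hn : 1 ≤ n) :
    (n:ℝ) * btilde κ δ σ n = κ + ((n:ℝ) - 1) * (δ + σ) := by
  have hn1 : (1:ℝ) ≤ (n:ℝ) := by exact_mod_cast hn
  have hnne : (n:ℝ) ≠ 0 := by linarith
  unfold btilde
  field_simp

/-- The sup (upper-bound) property: for every `x ≥ 0`,
`n f(x) − (κ + (n−1)(δ+σ)) x ≤ n f*(β̃(n))`. -/
lemma sup_lem (B : BenefitFun) (κ δ σ : ℝ) (hκ : 0 < κ) (hδ : 0 < δ) (hσ : 0 < σ)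
    (hcost : δ + σ < κ) (hκf : κ < B.f' 0) (n : ℕ) (x : ℝ) (hx : 0 ≤ x) :
    (n:ℝ) * B.f x - (κ + ((n:ℝ) - 1) * (δ + σ)) * x ≤ (n:ℝ) * B.fstar (btilde κ δ σ n) := by
  rcases Nat.eq_zero_or_pos n with h0 | hn
  · subst h0
    simp only [Nat.cast_zero, zero_mul]
    nlinarith
  · set α := btilde κ δ σ n with hα
    have hαpos : 0 < α := btilde_pos κ δ σ hκ hδ hσ n hn
    have hαle : α ≤ B.f' 0 := (btilde_le κ δ σ hcost n hn).trans hκf.le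
    have hmax := B.xhat_max α hαpos hαle x hx
    have hnn : (0:ℝ) ≤ (n:ℝ) := by positivity
    have hmul := mul_le_mul_of_nonneg_left hmax hnn
    have hkey := btilde_mul κ δ σ n hn
    rw [← hα] at hkey
    unfold BenefitFun.fstar
    nlinarith [hmul, hkey]

/-- Attainment: `n f*(β̃(n))` is attained by some `x ≥ 0`. -/
lemma attain_lem (B : BenefitFun) (κ δ σ : ℝ) (hκ : 0 < κ) (hδ : 0 < δ) (hσ : 0 < σ)
    (hcost : δ + σ < κ) (hκf : κ < B.f' 0) (n : ℕ) :
    ∃ x : ℝ, 0 ≤ x ∧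
      (n:ℝ) * B.fstar (btilde κ δ σ n) = (n:ℝ) * B.f x - (κ + ((n:ℝ) - 1) * (δ + σ)) * x := by
  rcases Nat.eq_zero_or_pos n with h0 | hn
  · subst h0
    exact ⟨0, le_refl 0, by simp [B.f_zero]⟩
  · set α := btilde κ δ σ n with hα
    have hαpos : 0 < α := btilde_pos κ δ σ hκ hδ hσ n hn
    have hαle : α ≤ B.f' 0 := (btilde_le κ δ σ hcost n hn).trans hκf.le
    refine ⟨B.xhat α, B.xhat_nonneg α hαpos hαle, ?_⟩
    have hkey := btilde_mul κ δ σ n hn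
    rw [← hα] at hkey
    unfold BenefitFun.fstar
    linear_combination (-(B.xhat α)) * hkey

theorem stmt5 (B : BenefitFun) (N : ℕ) (hN : 2 ≤ N)
    (κ δ σ : ℝ) (hκ : 0 < κ) (hδ : 0 < δ) (hσ : 0 < σ)
    (hcost : δ + σ < κ) (hκf : κ < B.f' 0) :
    ∀ S T : Finset (Fin N),
      vgame B κ δ σ S + vgame B κ δ σ T ≤ vgame B κ δ σ (S ∪ T) + vgame B κ δ σ (S ∩ T) := by
  intro S T
  set a := S.card with ha
  set b := T.card with hb
  set c := (S ∩ T).card with hc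
  set d := (S ∪ T).card with hd
  have hca : c ≤ a := Finset.card_le_card Finset.inter_subset_left
  have hcb : c ≤ b := Finset.card_le_card Finset.inter_subset_right
  have had : a ≤ d := Finset.card_le_card Finset.subset_union_left
  have hbd : b ≤ d := Finset.card_le_card Finset.subset_union_right
  have hsum : d + c = a + b := Finset.card_union_add_card_inter S T
  rcases eq_or_lt_of_le (hca.trans had) with hcd | hcd
  · -- c = d forces a = b = c = d
    have h1 : a = c := Nat.le_antisymm (by omega) hca
    have h2 : b = d := by omega
    unfold vgame
    rw [← ha, ← hb, ← hc, ← hd, h1, h2]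
    linarith
  · -- c < d : convexity argument
    have hCD : ((c:ℝ)) < (d:ℝ) := by exact_mod_cast hcd
    have hCA : ((c:ℝ)) ≤ (a:ℝ) := by exact_mod_cast hca
    have hCB : ((c:ℝ)) ≤ (b:ℝ) := by exact_mod_cast hcb
    have hAD : ((a:ℝ)) ≤ (d:ℝ) := by exact_mod_cast had
    have hBD : ((b:ℝ)) ≤ (d:ℝ) := by exact_mod_cast hbd
    have hSUM : (d:ℝ) + (c:ℝ) = (a:ℝ) + (b:ℝ) := by exact_mod_cast hsum
    obtain ⟨xa, hxa, hGa⟩ := attain_lem B κ δ σ hκ hδ hσ hcost hκf a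
    obtain ⟨xb, hxb, hGb⟩ := attain_lem B κ δ σ hκ hδ hσ hcost hκf b
    set Gc := (c:ℝ) * B.fstar (btilde κ δ σ c) with hGc
    set Gd := (d:ℝ) * B.fstar (btilde κ δ σ d) with hGd
    have i1 := sup_lem B κ δ σ hκ hδ hσ hcost hκf c xa hxa
    have i2 := sup_lem B κ δ σ hκ hδ hσ hcost hκf d xa hxa
    have i3 := sup_lem B κ δ σ hκ hδ hσ hcost hκf c xb hxb
    have i4 := sup_lem B κ δ σ hκ hδ hσ hcost hκf d xb hxb
    rw [← hGc] at i1 i3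
    rw [← hGd] at i2 i4
    have w1 : (0:ℝ) ≤ (d:ℝ) - (a:ℝ) := by linarith
    have w2 : (0:ℝ) ≤ (a:ℝ) - (c:ℝ) := by linarith
    have w3 : (0:ℝ) ≤ (d:ℝ) - (b:ℝ) := by linarith
    have w4 : (0:ℝ) ≤ (b:ℝ) - (c:ℝ) := by linarith
    have m1 := mul_le_mul_of_nonneg_left i1 w1
    have m2 := mul_le_mul_of_nonneg_left i2 w2
    have m3 := mul_le_mul_of_nonneg_left i3 w3
    have m4 := mul_le_mul_of_nonneg_left i4 w4
    have hA : ((d:ℝ) - (c:ℝ)) * ((a:ℝ) * B.fstar (btilde κ δ σ a)) ≤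
        ((d:ℝ) - (a:ℝ)) * Gc + ((a:ℝ) - (c:ℝ)) * Gd := by
      have : ((d:ℝ) - (c:ℝ)) * ((a:ℝ) * B.fstar (btilde κ δ σ a)) =
          ((d:ℝ) - (a:ℝ)) * ((c:ℝ) * B.f xa - (κ + ((c:ℝ) - 1) * (δ + σ)) * xa) +
          ((a:ℝ) - (c:ℝ)) * ((d:ℝ) * B.f xa - (κ + ((d:ℝ) - 1) * (δ + σ)) * xa) := by
        rw [hGa]; ring
      linarith [m1, m2]
    have hB : ((d:ℝ) - (c:ℝ)) * ((b:ℝ) * B.fstar (btilde κ δ σ b)) ≤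
        ((d:ℝ) - (b:ℝ)) * Gc + ((b:ℝ) - (c:ℝ)) * Gd := by
      have : ((d:ℝ) - (c:ℝ)) * ((b:ℝ) * B.fstar (btilde κ δ σ b)) =
          ((d:ℝ) - (b:ℝ)) * ((c:ℝ) * B.f xb - (κ + ((c:ℝ) - 1) * (δ + σ)) * xb) +
          ((b:ℝ) - (c:ℝ)) * ((d:ℝ) * B.f xb - (κ + ((d:ℝ) - 1) * (δ + σ)) * xb) := by
        rw [hGb]; ring
      linarith [m3, m4]
    have e1 : ((d:ℝ) - (a:ℝ)) + ((d:ℝ) - (b:ℝ)) = (d:ℝ) - (c:ℝ) := by linarith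
    have e2 : ((a:ℝ) - (c:ℝ)) + ((b:ℝ) - (c:ℝ)) = (d:ℝ) - (c:ℝ) := by linarith
    have hfin : ((d:ℝ) - (c:ℝ)) *
        ((a:ℝ) * B.fstar (btilde κ δ σ a) + (b:ℝ) * B.fstar (btilde κ δ σ b)) ≤
        ((d:ℝ) - (c:ℝ)) * (Gd + Gc) := by
      calc ((d:ℝ) - (c:ℝ)) *
          ((a:ℝ) * B.fstar (btilde κ δ σ a) + (b:ℝ) * B.fstar (btilde κ δ σ b))
          = ((d:ℝ) - (c:ℝ)) * ((a:ℝ) * B.fstar (btilde κ δ σ a)) +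
            ((d:ℝ) - (c:ℝ)) * ((b:ℝ) * B.fstar (btilde κ δ σ b)) := by ring
        _ ≤ (((d:ℝ) - (a:ℝ)) * Gc + ((a:ℝ) - (c:ℝ)) * Gd) +
            (((d:ℝ) - (b:ℝ)) * Gc + ((b:ℝ) - (c:ℝ)) * Gd) := add_le_add hA hB
        _ = (((d:ℝ) - (a:ℝ)) + ((d:ℝ) - (b:ℝ))) * Gc +
            (((a:ℝ) - (c:ℝ)) + ((b:ℝ) - (c:ℝ))) * Gd := by ring
        _ = ((d:ℝ) - (c:ℝ)) * Gc + ((d:ℝ) - (c:ℝ)) * Gd := by rw [e1, e2]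
        _ = ((d:ℝ) - (c:ℝ)) * (Gd + Gc) := by ring
    have hpos : (0:ℝ) < (d:ℝ) - (c:ℝ) := by linarith
    have hmain := le_of_mul_le_mul_left hfin hpos
    unfold vgame
    rw [← ha, ← hb, ← hc, ← hd, ← hGc, ← hGd]
    linarith [hmain]
end
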